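/- arXiv:1901.06304 — 11 statements merged into one kernel-verified Lean document; each statement's English description precedes it below -/
import Mathlib

section
/- A commutative unital ring R has the property that each principal ideal has a unique generator if and only if R satisfies the quasi-identity: for all x, y, z in R, if x*y*z = z then y*z = z. -/
theorem stmt_0 (R : Type*) [CommRing R] :
    (∀ r s : R, Ideal.span ({r} : Set R) = Ideal.span ({s} : Set R) → r = s) ↔
    (∀ x y z : R, x * y * z = z → y * z = z) := by
  constructor
  · intro h x y z hxyz
    apply h (y * z) z
    apply le_antisymm
    · rw [Ideal.span_singleton_le_span_singleton]
      exact ⟨y, mul_comm y z⟩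
    · rw [Ideal.span_singleton_le_span_singleton]
      exact ⟨x, by rw [mul_comm (y*z) x, ← mul_assoc, hxyz]⟩
  · intro h r s hrs
    obtain ⟨a, ha⟩ : s ∣ r := by
      rw [← Ideal.span_singleton_le_span_singleton]; exact hrs.le
    obtain ⟨b, hb⟩ : r ∣ s := by
      rw [← Ideal.span_singleton_le_span_singleton]; exact hrs.ge
    have key : a * b * r = r := by
      nth_rewrite 2 [ha]; rw [hb]; ring
    have := h a b r key
    rw [hb, mul_comm r b, this]
end

section
/- If R is a commutative unital ring satisfying the quasi-identity (x*y*z = z implies y*z = z), then R is reduced, i.e., R has no nonzero nilpotent elements. -/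
theorem stmt_2 (R : Type*) [CommRing R]
    (h : ∀ x y z : R, x * y * z = z → y * z = z) :
    ∀ n : R, n ^ 2 = 0 → n = 0 := by
  intro n hn
  have := h (1 - n) (1 + n) 1 (by linear_combination -hn)
  linear_combination this
end

section
/- Let R be a commutative unital ring satisfying the quasi-identity (x*y*z = z implies y*z = z), let S be a subset of R, and let A = ann(S) be the annihilator of S. Then the quotient ring R/A again satisfies the quasi-identity (x*y*z = z implies y*z = z). -/
theorem stmt_5 (R : Type*) [CommRing R]
    (h : ∀ x y z : R, x * y * z = z → y * z = z)
    (S : Set R) (A : Ideal R) (hA : ∀ r : R, r ∈ A ↔ ∀ s ∈ S, r * s = 0) :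
    ∀ x y z : R ⧸ A, x * y * z = z → y * z = z := by
  intro x y z hxyz
  obtain ⟨a, rfl⟩ := Ideal.Quotient.mk_surjective x
  obtain ⟨b, rfl⟩ := Ideal.Quotient.mk_surjective y
  obtain ⟨c, rfl⟩ := Ideal.Quotient.mk_surjective z
  rw [← map_mul, ← map_mul] at hxyz
  rw [← map_mul]
  rw [Ideal.Quotient.mk_eq_mk_iff_sub_mem] at hxyz ⊢
  rw [hA] at hxyz ⊢
  intro s hs
  have := h a b (c * s) (by
    have := hxyz s hs
    rw [sub_mul] at this
    linear_combination this)
  rw [sub_mul]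
  linear_combination this
end

section
/- Let R be a commutative unital ring satisfying the quasi-identity (x*y*z = z implies y*z = z). If R is not an integral domain (and R is nonzero), then R has two nonzero ideals I and J with I ∩ J = {0} such that both R/I and R/J satisfy the same quasi-identity. -/
theorem stmt_6 (R : Type*) [CommRing R] [Nontrivial R]
    (h : ∀ x y z : R, x * y * z = z → y * z = z)
    (hnd : ∃ r s : R, r ≠ 0 ∧ s ≠ 0 ∧ r * s = 0) :
    ∃ I J : Ideal R, I ≠ ⊥ ∧ J ≠ ⊥ ∧ I ⊓ J = ⊥ ∧
      (∀ x y z : R ⧸ I, x * y * z = z → y * z = z) ∧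
      (∀ x y z : R ⧸ J, x * y * z = z → y * z = z) := by
  -- R is reduced
  have hred : ∀ a : R, a * a = 0 → a = 0 := by
    intro a ha
    have h1 : (1 + a) * (1 - a) * 1 = 1 := by linear_combination -ha
    have h2 := h (1 + a) (1 - a) 1 h1
    have : a = 0 := by linear_combination -h2
    exact this
  obtain ⟨r, s, hr, hs, hrs⟩ := hnd
  -- I = annihilator of r
  set I : Ideal R := LinearMap.ker (LinearMap.mulLeft R r) with hI
  have memI : ∀ a : R, a ∈ I ↔ r * a = 0 := fun a => Iff.rfl
  set J : Ideal R := Submodule.annihilator I with hJ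
  have memJ : ∀ b : R, b ∈ J ↔ ∀ a ∈ I, b * a = 0 := by
    intro b
    rw [hJ, Submodule.mem_annihilator]
    simp [smul_eq_mul]
  refine ⟨I, J, ?_, ?_, ?_, ?_, ?_⟩
  · intro hbot
    have : s ∈ I := (memI s).2 hrs
    rw [hbot] at this
    exact hs (by simpa using this)
  · intro hbot
    have : r ∈ J := (memJ r).2 (fun a ha => by
      have := (memI a).1 ha
      linear_combination this)
    rw [hbot] at this
    exact hr (by simpa using this)
  · apply le_antisymm
    · intro a ha
      obtain ⟨haI, haJ⟩ := Submodule.mem_inf.1 ha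
      have : a * a = 0 := (memJ a).1 haJ a haI
      simpa using hred a this
    · exact bot_le
  · intro x y z
    obtain ⟨x, rfl⟩ := Ideal.Quotient.mk_surjective x
    obtain ⟨y, rfl⟩ := Ideal.Quotient.mk_surjective y
    obtain ⟨z, rfl⟩ := Ideal.Quotient.mk_surjective z
    intro hxyz
    rw [← map_mul, ← map_mul, Ideal.Quotient.eq] at hxyz
    rw [← map_mul, Ideal.Quotient.eq]
    have h1 : r * (x * y * z - z) = 0 := (memI _).1 hxyz
    have h2 : x * y * (z * r) = z * r := by linear_combination h1
    have h3 := h x y (z * r) h2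
    refine (memI _).2 ?_
    linear_combination h3
  · intro x y z
    obtain ⟨x, rfl⟩ := Ideal.Quotient.mk_surjective x
    obtain ⟨y, rfl⟩ := Ideal.Quotient.mk_surjective y
    obtain ⟨z, rfl⟩ := Ideal.Quotient.mk_surjective z
    intro hxyz
    rw [← map_mul, ← map_mul, Ideal.Quotient.eq] at hxyz
    rw [← map_mul, Ideal.Quotient.eq]
    refine (memJ _).2 ?_
    intro a ha
    have h1 : (x * y * z - z) * a = 0 := (memJ _).1 hxyz a ha
    have h2 : x * y * (z * a) = z * a := by linear_combination h1
    have h3 := h x y (z * a) h2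
    linear_combination h3
end

section
/- Every finite commutative unital ring satisfying the quasi-identity (x*y*z = z implies y*z = z) is a Boolean ring. -/
theorem stmt_8 (R : Type*) [CommRing R] [Fintype R]
    (h : ∀ x y z : R, x * y * z = z → y * z = z) :
    ∀ x : R, x * x = x := by
  -- Units are trivial
  have hu : ∀ u : Rˣ, (u : R) = 1 := by
    intro u
    have h1 : ((u⁻¹ : Rˣ) : R) * (u : R) * 1 = 1 := by simp
    have := h _ _ _ h1
    simpa using this
  -- Nilpotents are zero
  have hred : ∀ n : R, IsNilpotent n → n = 0 := by
    intro n hn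
    have h1 : IsUnit (1 + n) := hn.isUnit_one_add
    obtain ⟨u, hu2⟩ := h1
    have h2 := hu u
    rw [hu2] at h2
    linear_combination h2
  intro x
  obtain ⟨i, j, hij, hpow⟩ : ∃ i j : ℕ, i < j ∧ x ^ (i + 1) = x ^ (j + 1) := by
    obtain ⟨a, b, hab, heq⟩ := Finite.exists_ne_map_eq_of_infinite (fun n : ℕ => x ^ (n + 1))
    rcases lt_or_gt_of_ne hab with hlt | hgt
    · exact ⟨a, b, hlt, heq⟩
    · exact ⟨b, a, hgt, heq.symm⟩
  set k := j - i with hk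
  have hk1 : 1 ≤ k := by omega
  have hik : i + 1 + k = j + 1 := by omega
  have hz : x ^ (i + 1) * (x ^ k - 1) = 0 := by
    rw [mul_sub, mul_one, ← pow_add, hik, hpow]
    ring
  have hnil : IsNilpotent (x ^ (k + 1) - x) := by
    refine ⟨i + 1, ?_⟩
    have hfac : x ^ (k + 1) - x = x * (x ^ k - 1) := by ring
    rw [hfac, mul_pow]
    cases' i with i
    · simpa using hz
    · calc x ^ (i + 1 + 1) * (x ^ k - 1) ^ (i + 1 + 1)
          = (x ^ (i + 1 + 1) * (x ^ k - 1)) * (x ^ k - 1) ^ (i + 1) := by ring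
        _ = 0 := by rw [hz, zero_mul]
  have hkey : x ^ (k + 1) = x := sub_eq_zero.mp (hred _ hnil)
  have hform : x ^ (k - 1) * x * x = x := by
    rw [← pow_succ, ← pow_succ, show k - 1 + 1 + 1 = k + 1 from by omega, hkey]
  exact h _ _ _ hform
end

section
/- If R is a commutative unital ring satisfying the quasi-identity (x*y*z = z implies y*z = z) and r in R satisfies r ≠ r^2, then the quotient R/(r^2) contains a nonzero nilpotent element; in particular R/(r^2) does not satisfy the quasi-identity. -/
theorem stmt_9 (R : Type*) [CommRing R]
    (h : ∀ x y z : R, x * y * z = z → y * z = z)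
    (r : R) (hr : r ≠ r ^ 2) :
    (Ideal.Quotient.mk (Ideal.span ({r ^ 2} : Set R)) r ≠ 0 ∧
      (Ideal.Quotient.mk (Ideal.span ({r ^ 2} : Set R)) r) ^ 2 = 0) ∧
    ¬ (∀ x y z : R ⧸ Ideal.span ({r ^ 2} : Set R), x * y * z = z → y * z = z) := by
  set I := Ideal.span ({r ^ 2} : Set R) with hI
  set t := Ideal.Quotient.mk I r with htdef
  have ht2 : t ^ 2 = 0 := by
    rw [htdef, ← map_pow, Ideal.Quotient.eq_zero_iff_mem, hI]
    exact Ideal.mem_span_singleton_self _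
  have htne : t ≠ 0 := by
    intro h0
    rw [htdef, Ideal.Quotient.eq_zero_iff_mem, hI, Ideal.mem_span_singleton] at h0
    obtain ⟨a, ha⟩ := h0
    have key : a * r * r = r := by
      conv_rhs => rw [ha]
      ring
    have := h a r r key
    apply hr
    rw [sq]
    exact this.symm
  refine ⟨⟨htne, ht2⟩, ?_⟩
  intro H
  have h1 : (1 - t) * (1 + t) * 1 = 1 := by ring_nf; rw [ht2]; ring
  have := H (1 - t) (1 + t) 1 h1
  apply htne
  have : t + 1 = 1 := by linear_combination this
  linear_combination this
end

section
/- The unit group of the commutative F_2-algebra R = F_2[X,Y,Z]/(XYZ - Z) is trivial, i.e., the only unit of R is 1. -/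
/-!
Write the ring as `B[Z] ⧸ (Z * (XY - 1))` with `B = 𝔽₂[X, Y]`, and let `f * g ≡ 1`.
Reducing modulo `Z` and using that `1` is the only unit of `B` gives `f = 1 + Z a` and
`g = 1 + Z b`. Cancelling `Z`, we get `a + b + Z a b ≡ 0` modulo `XY - 1`, i.e.
`(1 + Z ā) (1 + Z b̄) = 1` over the domain `B ⧸ (XY - 1) ≅ 𝔽₂[X, X⁻¹]`. Units of a polynomial
ring over a domain are constant, so `ā = 0`, that is `f ≡ 1` modulo `Z * (XY - 1)`.
-/

theorem Ideal.Quotient.eq_one_of_isUnit_of_forall_dvd {S : Type*} [CommRing S] {r : S}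
    (h : ∀ f g : S, r ∣ f * g - 1 → r ∣ f - 1) {u : S ⧸ Ideal.span {r}} (hu : IsUnit u) :
    u = 1 := by
  obtain ⟨v, huv⟩ := hu.exists_right_inv
  obtain ⟨f, rfl⟩ := Ideal.Quotient.mk_surjective u
  obtain ⟨g, rfl⟩ := Ideal.Quotient.mk_surjective v
  rw [← map_mul, ← map_one (Ideal.Quotient.mk _), Ideal.Quotient.eq,
    Ideal.mem_span_singleton] at huv
  rw [← map_one (Ideal.Quotient.mk _), Ideal.Quotient.eq, Ideal.mem_span_singleton]
  exact h f g huv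

namespace Polynomial

variable {R : Type*} [CommRing R]

theorem eq_zero_of_isUnit_one_add_X_mul [IsDomain R] {a : R[X]} (h : IsUnit (1 + X * a)) :
    a = 0 := by
  obtain ⟨r, -, hr⟩ := isUnit_iff.mp h
  have hr1 : r = 1 := by simpa using congrArg (coeff · 0) hr
  rw [hr1, C_1, left_eq_add] at hr
  exact isRegular_X.left.mul_left_eq_zero_iff.mp hr

theorem X_dvd_sub_one_of_X_dvd_mul_sub_one (hR : ∀ r : R, IsUnit r → r = 1) {f g : R[X]}
    (h : X ∣ f * g - 1) : X ∣ f - 1 := by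
  simp only [X_dvd_iff, coeff_sub, mul_coeff_zero, coeff_one_zero, sub_eq_zero] at h ⊢
  exact hR _ (IsUnit.of_mul_eq_one _ h)

theorem C_dvd_iff_map_mk_eq_zero (q : R) (p : R[X]) :
    C q ∣ p ↔ p.map (Ideal.Quotient.mk (Ideal.span {q})) = 0 := by
  simp only [C_dvd_iff_dvd_coeff, Polynomial.ext_iff, coeff_map, coeff_zero,
    Ideal.Quotient.eq_zero_iff_mem, Ideal.mem_span_singleton]

theorem X_mul_C_dvd_sub_one_of_dvd_mul_sub_one (hR : ∀ r : R, IsUnit r → r = 1) {q : R}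
    [IsDomain (R ⧸ Ideal.span {q})] {f g : R[X]} (h : X * C q ∣ f * g - 1) :
    X * C q ∣ f - 1 := by
  obtain ⟨a, ha⟩ := X_dvd_sub_one_of_X_dvd_mul_sub_one hR (dvd_of_mul_right_dvd h)
  obtain ⟨b, hb⟩ := X_dvd_sub_one_of_X_dvd_mul_sub_one hR
    (dvd_of_mul_right_dvd (mul_comm f g ▸ h))
  have hab : C q ∣ a + b + X * (a * b) := by
    rw [← isRegular_X.left.dvd_cancel_left]
    convert h using 1
    linear_combination (-(1 + X * b)) * ha - f * hb
  rw [C_dvd_iff_map_mk_eq_zero] at hab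
  rw [ha]
  refine mul_dvd_mul_left X ((C_dvd_iff_map_mk_eq_zero q a).mpr ?_)
  set π := Ideal.Quotient.mk (Ideal.span {q})
  refine eq_zero_of_isUnit_one_add_X_mul (IsUnit.of_mul_eq_one (1 + X * b.map π) ?_)
  simp only [Polynomial.map_add, Polynomial.map_mul, Polynomial.map_X] at hab
  linear_combination X * hab

end Polynomial

theorem AdjoinRoot.isDomain_C_mul_X_sub_one {R : Type*} [CommRing R] [IsDomain R] {r : R}
    (hr : r ≠ 0) : IsDomain (AdjoinRoot (Polynomial.C r * Polynomial.X - 1)) :=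
  have := IsLocalization.adjoin_inv r
  IsLocalization.Away.isDomain _ hr

theorem ZMod.eq_one_of_isUnit_two {x : ZMod 2} (hx : IsUnit x) : x = 1 := by
  fin_cases x
  · exact absurd hx not_isUnit_zero
  · rfl

namespace MvPolynomial

variable {R : Type*} [CommRing R]

theorem eq_one_of_isUnit_of_forall_eq_one [IsReduced R] (hR : ∀ r : R, IsUnit r → r = 1)
    {σ : Type*} {p : MvPolynomial σ R} (hp : IsUnit p) : p = 1 := by
  obtain ⟨r, hr, rfl⟩ := isUnit_iff_eq_C_of_isReduced.mp hp
  rw [hR r hr, C_1]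

instance isDomain_quotient_X_mul_X_sub_one [IsDomain R] :
    IsDomain (MvPolynomial (Fin 2) R ⧸
      Ideal.span {(X 0 * X 1 - 1 : MvPolynomial (Fin 2) R)}) := by
  have : IsDomain (Polynomial (MvPolynomial (Fin 1) R) ⧸
      Ideal.span {Polynomial.C (X 0 : MvPolynomial (Fin 1) R) * Polynomial.X - 1}) :=
    AdjoinRoot.isDomain_C_mul_X_sub_one (X_ne_zero 0)
  refine (Ideal.quotientEquiv _ (Ideal.span {Polynomial.C (X 0) * Polynomial.X - 1})
    (finSuccEquiv R 1).toRingEquiv ?_).toMulEquiv.isDomain _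
  rw [Ideal.map_span, Set.image_singleton]
  congr 2
  rw [show (1 : Fin 2) = Fin.succ 0 from rfl]
  simp only [RingEquiv.coe_toRingHom, AlgEquiv.coe_ringEquiv, map_sub, map_mul, map_one,
    finSuccEquiv_X_zero, finSuccEquiv_X_succ, mul_comm]

noncomputable def finSuccEquivLast (R : Type*) [CommRing R] (n : ℕ) :
    MvPolynomial (Fin (n + 1)) R ≃ₐ[R] Polynomial (MvPolynomial (Fin n) R) :=
  (renameEquiv R _root_.finSuccEquivLast).trans (optionEquivLeft R (Fin n))

@[simp]
theorem finSuccEquivLast_X_last {n : ℕ} :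
    finSuccEquivLast R n (X (Fin.last n)) = Polynomial.X := by
  simp [finSuccEquivLast, optionEquivLeft_X_none]

@[simp]
theorem finSuccEquivLast_X_castSucc {n : ℕ} (i : Fin n) :
    finSuccEquivLast R n (X i.castSucc) = Polynomial.C (X i) := by
  simp [finSuccEquivLast, optionEquivLeft_X_some]

theorem finSuccEquivLast_X_mul_X_mul_X_sub_X :
    finSuccEquivLast R 2 (X 0 * X 1 * X 2 - X 2) =
      Polynomial.X * Polynomial.C (X 0 * X 1 - 1) := by
  rw [show (2 : Fin 3) = Fin.last 2 from rfl, show (0 : Fin 3) = Fin.castSucc 0 from rfl,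
    show (1 : Fin 3) = Fin.castSucc 1 from rfl]
  simp only [map_sub, map_mul, map_one, finSuccEquivLast_X_last, finSuccEquivLast_X_castSucc]
  ring

end MvPolynomial

open MvPolynomial in
theorem stmt_11 :
    ∀ u : MvPolynomial (Fin 3) (ZMod 2) ⧸
        Ideal.span ({X 0 * X 1 * X 2 - X 2} : Set (MvPolynomial (Fin 3) (ZMod 2))),
      IsUnit u → u = 1 := by
  intro u hu
  refine Ideal.Quotient.eq_one_of_isUnit_of_forall_dvd (fun f g h ↦ ?_) hu
  set e := finSuccEquivLast (ZMod 2) 2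
  have he := map_dvd e h
  rw [finSuccEquivLast_X_mul_X_mul_X_sub_X, map_sub e (f * g), map_mul e, map_one e] at he
  rw [← map_dvd_iff e, finSuccEquivLast_X_mul_X_mul_X_sub_X, map_sub e f, map_one e]
  exact Polynomial.X_mul_C_dvd_sub_one_of_dvd_mul_sub_one
    (fun _ ↦ eq_one_of_isUnit_of_forall_eq_one fun _ ↦ ZMod.eq_one_of_isUnit_two) he
end

section
/- Let n be a positive integer, let R be a commutative unital ring satisfying the quasi-identities (x^2 = 0 implies x = 0) and (x*y*z = z implies y^n*z = z), let S be a subset of R, and A = ann(S). Then R/A also satisfies both quasi-identities. -/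
theorem stmt_13 (n : ℕ) (hn : 0 < n) (R : Type*) [CommRing R]
    (h1 : ∀ x : R, x ^ 2 = 0 → x = 0)
    (h2 : ∀ x y z : R, x * y * z = z → y ^ n * z = z)
    (S : Set R) (A : Ideal R) (hA : ∀ r : R, r ∈ A ↔ ∀ s ∈ S, r * s = 0) :
    (∀ x : R ⧸ A, x ^ 2 = 0 → x = 0) ∧
    (∀ x y z : R ⧸ A, x * y * z = z → y ^ n * z = z) := by
  constructor
  · intro x hx
    obtain ⟨r, rfl⟩ := Ideal.Quotient.mk_surjective x
    rw [← map_pow, Ideal.Quotient.eq_zero_iff_mem, hA] at hx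
    rw [Ideal.Quotient.eq_zero_iff_mem, hA]
    intro s hs
    apply h1
    have h : (r * s) ^ 2 = (r ^ 2 * s) * s := by ring
    rw [h, hx s hs, zero_mul]
  · intro x y z hxyz
    obtain ⟨a, rfl⟩ := Ideal.Quotient.mk_surjective x
    obtain ⟨b, rfl⟩ := Ideal.Quotient.mk_surjective y
    obtain ⟨c, rfl⟩ := Ideal.Quotient.mk_surjective z
    rw [← map_mul, ← map_mul, Ideal.Quotient.eq, hA] at hxyz
    rw [← map_pow, ← map_mul, Ideal.Quotient.eq, hA]
    intro s hs
    have h := hxyz s hs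
    have h' : a * b * (c * s) = c * s := by
      have : (a * b * c - c) * s = a * b * (c * s) - c * s := by ring
      rw [this] at h
      exact sub_eq_zero.mp h
    have := h2 a b (c * s) h'
    calc (b ^ n * c - c) * s = b ^ n * (c * s) - c * s := by ring
      _ = 0 := by rw [this]; ring
end

section
/- In a semiprime Bézout monoid S, for every idempotent e, the set S_e = { s in S : s^⊥ = e^⊥ } equals e*S_1, where S_1 is the set of non-zero-divisors of S. -/
structure IsBezoutMonoid (S : Type*) [CommMonoidWithZero S] [Lattice S] : Prop where
  le_iff_dvd : ∀ a b : S, a ≤ b ↔ a ∣ b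
  inf_sup_distrib : ∀ a b c : S, a ⊓ (b ⊔ c) = (a ⊓ b) ⊔ (a ⊓ c)
  mul_inf : ∀ a b c : S, a * (b ⊓ c) = a * b ⊓ a * c
  mul_sup : ∀ a b c : S, a * (b ⊔ c) = a * b ⊔ a * c
  hypernormal : ∀ a b a₁ : S, a = (a ⊓ b) * a₁ →
    ∃ b₁ : S, a₁ ⊓ b₁ = 1 ∧ b = (a ⊓ b) * b₁

theorem stmt_17 (S : Type*) [CommMonoidWithZero S] [Lattice S]
    (hB : IsBezoutMonoid S)
    (hsemiprime : ∀ x : S, ∀ n : ℕ, 0 < n → x ^ n = 0 → x = 0)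
    (e : S) (he : e * e = e) :
    {s : S | ∀ x : S, s * x = 0 ↔ e * x = 0} =
      (fun c => e * c) '' {c : S | ∀ x : S, c * x = 0 → x = 0} := by
  have htop : ∀ x : S, x ≤ 0 := fun x => (hB.le_iff_dvd x 0).2 (dvd_zero x)
  have hinf0 : ∀ u : S, u ⊓ 0 = u := fun u => inf_eq_left.mpr (htop u)
  have hmeet0 : ∀ u v : S, u ⊓ v = 0 → u = 0 ∧ v = 0 := by
    intro u v h
    refine ⟨le_antisymm (htop u) ?_, le_antisymm (htop v) ?_⟩
    · exact h ▸ inf_le_left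
    · exact h ▸ inf_le_right
  -- obtain the complement f of e : e ⊓ f = 1 and e * f = 0
  obtain ⟨f, hef1, hef0⟩ := hB.hypernormal e 0 e (by rw [hinf0, he])
  rw [hinf0] at hef0
  -- hef0 : 0 = e * f
  ext s
  simp only [Set.mem_setOf_eq, Set.mem_image]
  constructor
  · intro hs
    have hsf : s * f = 0 := (hs f).2 hef0.symm
    have hse : e * s = s := by
      have h1 : s * (e ⊓ f) = s := by rw [hef1, mul_one]
      rw [hB.mul_inf, hsf, hinf0] at h1
      rw [mul_comm]; exact h1
    refine ⟨s ⊓ f, ?_, ?_⟩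
    · intro x hx
      rw [mul_comm, hB.mul_inf] at hx
      obtain ⟨hxs, hxf⟩ := hmeet0 _ _ hx
      have hex : e * x = 0 := (hs x).1 (by rw [mul_comm]; exact hxs)
      have : x * (e ⊓ f) = x := by rw [hef1, mul_one]
      have hfx : f * x = 0 := by rw [mul_comm]; exact hxf
      rw [hB.mul_inf, mul_comm x e, mul_comm x f, hex, hfx, inf_idem] at this
      exact this.symm
    · rw [hB.mul_inf, hse, ← hef0, hinf0]
  · rintro ⟨c, hc, rfl⟩
    intro x
    constructor
    · intro h
      have : c * (e * x) = 0 := by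
        rw [← mul_assoc, mul_comm c e, h]
      exact hc _ this
    · intro h
      rw [mul_assoc, mul_comm c x, ← mul_assoc, h, zero_mul]
end

section
/- Let S be a semiprime Bézout monoid with an element a ≠ 0 such that P = a^⊥ is an m-prime filter consisting of idempotents. Then c*e = e for every non-zero-divisor c of S and every e in P; in particular P ⊆ cS for all non-zero-divisors c. -/
theorem stmt_18 (S : Type*) [CommMonoidWithZero S] [Lattice S]
    (hB : IsBezoutMonoid S)
    (hsemiprime : ∀ x : S, ∀ n : ℕ, 0 < n → x ^ n = 0 → x = 0)
    (a : S) (ha : a ≠ 0)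
    (P : Set S) (hP : ∀ x : S, x ∈ P ↔ a * x = 0)
    (hup : ∀ x y : S, x ∈ P → x ≤ y → y ∈ P)
    (hinf : ∀ x y : S, x ∈ P → y ∈ P → x ⊓ y ∈ P)
    (hproper : P ≠ Set.univ)
    (hmprime : ∀ x y : S, x * y ∈ P → x ∈ P ∨ y ∈ P)
    (hidem : ∀ e ∈ P, e * e = e) :
    ∀ c : S, (∀ x : S, c * x = 0 → x = 0) →
      (∀ e ∈ P, c * e = e) ∧ (∀ e ∈ P, c ∣ e) := by
  intro c hc
  have le_of_dvd : ∀ x y : S, x ∣ y → x ≤ y := fun x y h => (hB.le_iff_dvd x y).mpr h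
  have dvd_of_le : ∀ x y : S, x ≤ y → x ∣ y := fun x y h => (hB.le_iff_dvd x y).mp h
  have one_bot : ∀ x : S, (1 : S) ≤ x := fun x => le_of_dvd _ _ (one_dvd x)
  have top0 : ∀ x : S, x ≤ (0 : S) := fun x => le_of_dvd _ _ (dvd_zero x)
  -- Lemma A: an idempotent g acts as identity on its multiples
  have lemA : ∀ g y : S, g * g = g → g ∣ y → g * y = y := by
    rintro g y hg ⟨t, rfl⟩
    rw [← mul_assoc, hg]
  -- Lemma B: for idempotent g, g * x = g ⊔ x
  have lemB : ∀ g x : S, g * g = g → g * x = g ⊔ x := by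
    intro g x hg
    have h1 : g * (g ⊔ x) = g ⊔ x := lemA g (g ⊔ x) hg (dvd_of_le _ _ le_sup_left)
    have h2 : g * (g ⊔ x) = g * x := by
      rw [hB.mul_sup, hg]
      exact sup_eq_right.mpr (le_of_dvd _ _ ⟨x, rfl⟩)
    rw [← h2, h1]
  have key : ∀ e ∈ P, c * e = e := by
    intro e he
    have hee : e * e = e := hidem e he
    -- f := c * e is in P, hence idempotent
    have hef_dvd : e ∣ c * e := ⟨c, mul_comm c e⟩
    have hfP : c * e ∈ P := hup e (c * e) he (le_of_dvd _ _ hef_dvd)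
    have hff : (c * e) * (c * e) = c * e := hidem _ hfP
    have hef : e ⊓ (c * e) = e := inf_eq_left.mpr (le_of_dvd _ _ hef_dvd)
    -- hypernormal on (e, c*e) with a₁ = e gives w with e ⊓ w = 1, c*e = e*w
    obtain ⟨w, hw1, hw2⟩ := hB.hypernormal e (c * e) e (by rw [hef, hee])
    rw [hef] at hw2
    -- w is idempotent
    have hcop : e ⊓ (w * w) = 1 := by
      have hle : e ⊓ (w * w) ≤ (e ⊓ w) * (e ⊓ w) := by
        rw [hB.mul_inf, mul_comm (e ⊓ w) e, mul_comm (e ⊓ w) w, hB.mul_inf, hB.mul_inf]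
        refine le_inf (le_inf ?_ ?_) (le_inf ?_ ?_)
        · exact inf_le_left.trans (le_of_dvd _ _ ⟨e, rfl⟩)
        · exact inf_le_left.trans (le_of_dvd _ _ ⟨w, rfl⟩)
        · exact inf_le_left.trans (le_of_dvd _ _ ⟨w, mul_comm w e⟩)
        · exact inf_le_right
      have h1 : (e ⊓ w) * (e ⊓ w) = 1 := by rw [hw1, mul_one]
      exact le_antisymm (h1 ▸ hle) (one_bot _)
    have heww : e * (w * w) = e * w := by
      have h1 : (e * w) * (e * w) = e * (w * w) := by
        rw [mul_mul_mul_comm, hee]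
      rw [← h1, ← hw2, hff, hw2]
    have hww : w * w = w := by
      have hsup_eq : e ⊔ (w * w) = e ⊔ w := by
        rw [← lemB e (w * w) hee, ← lemB e w hee, heww]
      have hle : w * w ≤ e ⊔ w := by
        rw [← hsup_eq]; exact le_sup_right
      have h0 : w * w = (w * w) ⊓ (e ⊔ w) := (inf_eq_left.mpr hle).symm
      rw [h0, hB.inf_sup_distrib, inf_comm (w * w) e, hcop,
        inf_eq_right.mpr (le_of_dvd _ _ ⟨w, rfl⟩)]
      exact sup_eq_right.mpr (one_bot w)
    -- hypernormal on (w, 0) with a₁ = w gives b coprime to w with w*b = 0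
    have hw0 : w ⊓ (0 : S) = w := inf_eq_left.mpr (top0 w)
    obtain ⟨b, hb1, hb2⟩ := hB.hypernormal w 0 w (by rw [hw0, hww])
    rw [hw0] at hb2
    -- transfer annihilation to e using that c is a non-zero-divisor
    have heb : e * b = 0 := by
      apply hc
      have : c * (e * b) = (e * w) * b := by rw [← mul_assoc, hw2]
      rw [this, mul_assoc, ← hb2, mul_zero]
    have hsup0 : e ⊔ b = 0 := by rw [← lemB e b hee, heb]
    -- conclude w = 1
    have hwone : w = 1 := by
      have h0 : w = w ⊓ (e ⊔ b) := by rw [hsup0, hw0]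
      rw [h0, hB.inf_sup_distrib, inf_comm w e, hw1, hb1, sup_idem]
    rw [hw2, hwone, mul_one]
  exact ⟨key, fun e he => ⟨e, (key e he).symm⟩⟩
end

section
/- Let S be a semiprime Bézout monoid with an element a ≠ 0 such that P = a^⊥ is an m-prime filter consisting of idempotents. Then for every d with d^⊥ = P (or d = 0), every e in P, and every idempotent f not in P which is the orthogonal complement of e, one has d*e = 0 and d*f = d. -/
theorem stmt_19 (S : Type*) [CommMonoidWithZero S] [Lattice S]
    (hB : IsBezoutMonoid S)
    (hsemiprime : ∀ x : S, ∀ n : ℕ, 0 < n → x ^ n = 0 → x = 0)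
    (a : S) (ha : a ≠ 0)
    (P : Set S) (hP : ∀ x : S, x ∈ P ↔ a * x = 0)
    (hup : ∀ x y : S, x ∈ P → x ≤ y → y ∈ P)
    (hinf : ∀ x y : S, x ∈ P → y ∈ P → x ⊓ y ∈ P)
    (hproper : P ≠ Set.univ)
    (hmprime : ∀ x y : S, x * y ∈ P → x ∈ P ∨ y ∈ P)
    (hidem : ∀ e ∈ P, e * e = e) :
    ∀ d : S, (d = 0 ∨ ∀ x : S, d * x = 0 ↔ x ∈ P) →
      ∀ e ∈ P, ∀ f : S, f * f = f → f ∉ P → e ⊓ f = 1 → e * f = 0 →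
        d * e = 0 ∧ d * f = d := by
  intro d hd e heP f hf hfP hef hef0
  rcases hd with rfl | hd
  · simp
  · have hde : d * e = 0 := (hd e).mpr heP
    refine ⟨hde, ?_⟩
    have h1 : d * (e ⊓ f) = d * e ⊓ d * f := hB.mul_inf d e f
    rw [hef, mul_one, hde] at h1
    have hle : d * f ≤ 0 := (hB.le_iff_dvd _ _).mpr (dvd_zero _)
    rw [inf_eq_right.mpr hle] at h1
    exact h1.symm
end
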